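/- arXiv:2509.18203 — 2 statements merged into one kernel-verified Lean document; each statement's English description precedes it below -/
import Mathlib

section
/- In the two-dimensional square lattice (d = 2), for the base case t = d−1 = 1: L_2 = {(1,1)}, K_1 = {(0,1), (1,0)}, and the orthogonal complement of ker T₁^{(1)} in ℝ^{K_1} is one-dimensional, spanned by the vector (γ_{(0,1)(1,1)}, γ_{(1,0)(1,1)}). Consequently, ker T₁^{(1)} uniquely determines the ratios and, together with the current at a single excitation, the values of the conductivities on the corner edges E(K_1, L_2). -/
/-!
Summing `w · Δ_γ w` over the vertices gives minus the Dirichlet energy `½ ∑ γ_{pq} (w_p - w_q)²`.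
Let `φ` be supported on `K_1 = {a, b}`, `a = (0,1)`, `b = (1,0)`, with harmonic extension `u`
vanishing at the corner `c = (1,1)`. Cutting `u` off to the interior points of coordinate sum
`≥ 3` keeps it harmonic where it is nonzero, since its other neighbours are `c` or boundary
nodes outside `K_1`; so its energy vanishes, it is constant along edges, and connectedness of
the interior down to `c` forces it to vanish. Thus `u = 0` off `{a, b}`, and harmonicity at `c`
reads `γ_{ac} φ_a + γ_{bc} φ_b = 0`. Conversely, the potential `(γ_{bc}, -γ_{ac})` on `K_1`,
extended by zero, is already harmonic, so orthogonality to it makes `w` proportional to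
`(γ_{ac}, γ_{bc})`.
-/

noncomputable section
open Classical Finset

namespace DiscreteCalderon

/-- Vertices of the ambient lattice `ℤ^d`. -/
abbrev V (d : ℕ) := Fin d → ℤ

/-- Interior vertex set `D = {x : 1 ≤ x_i ≤ n}`. -/
def Dset (d n : ℕ) : Set (V d) := {x | ∀ i, 1 ≤ x i ∧ x i ≤ (n : ℤ)}

/-- ℓ¹ distance. -/
def dist1 {d : ℕ} (p q : V d) : ℤ := ∑ i, |p i - q i|

/-- Boundary vertex set `∂D`: vertices at ℓ¹ distance 1 from `D`. -/
def Bset (d n : ℕ) : Set (V d) := {p | p ∉ Dset d n ∧ ∃ q ∈ Dset d n, dist1 p q = 1}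

/-- All vertices of the graph, `D ∪ ∂D`. -/
def Vset (d n : ℕ) : Set (V d) := Dset d n ∪ Bset d n

/-- Adjacency of the lattice graph: ℓ¹ distance 1, both endpoints vertices,
not both on the boundary. -/
def Adj (d n : ℕ) (p q : V d) : Prop :=
  dist1 p q = 1 ∧ p ∈ Vset d n ∧ q ∈ Vset d n ∧ (p ∈ Dset d n ∨ q ∈ Dset d n)

/-- A finite box containing all vertices. -/
def box (d n : ℕ) : Finset (V d) :=
  Fintype.piFinset (fun _ : Fin d => Finset.Icc (0 : ℤ) ((n : ℤ) + 1))

/-- Neighbours of `p` in the graph, as a finite set. -/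
def nbr (d n : ℕ) (p : V d) : Finset (V d) := (box d n).filter (fun q => Adj d n p q)

/-- Interior neighbours of `p`. -/
def nbrD (d n : ℕ) (p : V d) : Finset (V d) := (nbr d n p).filter (fun q => q ∈ Dset d n)

/-- The discrete (weighted) Laplacian `(Δ_γ u)_p = ∑_{q∈N(p)} γ_{qp}(u_q - u_p)`. -/
def lap (d n : ℕ) (γ : V d → V d → ℝ) (u : V d → ℝ) (p : V d) : ℝ :=
  ∑ q ∈ nbr d n p, γ q p * (u q - u p)

/-- The boundary current `(D_γ u)_p = ∑_{q∈N(p)∩D} γ_{pq}(u_q - u_p)`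
(there is exactly one interior neighbour of a boundary node). -/
def cur (d n : ℕ) (γ : V d → V d → ℝ) (u : V d → ℝ) (p : V d) : ℝ :=
  ∑ q ∈ nbrD d n p, γ p q * (u q - u p)

/-- A strictly positive symmetric conductivity. -/
def GoodCond (d n : ℕ) (γ : V d → V d → ℝ) : Prop :=
  (∀ p q, γ p q = γ q p) ∧ ∀ p q, Adj d n p q → 0 < γ p q

/-- The coordinate sum of a lattice point. -/
def sum1 {d : ℕ} (x : V d) : ℤ := ∑ i, x i

/-- Interior diagonal slice `L_t`. -/
def L (d n : ℕ) (t : ℤ) : Set (V d) := {x | x ∈ Dset d n ∧ sum1 x = t}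

/-- `L_t^S = ∪_{ℓ ≤ t} L_ℓ`. -/
def LS (d n : ℕ) (t : ℤ) : Set (V d) := {x | x ∈ Dset d n ∧ sum1 x ≤ t}

/-- Boundary diagonal slice `K_t`. -/
def K (d n : ℕ) (t : ℤ) : Set (V d) := {x | x ∈ Bset d n ∧ sum1 x = t}

/-- `K_t^- = {x ∈ K_t : min_i x_i = 0}`. -/
def Km (d n : ℕ) (t : ℤ) : Set (V d) := {x | x ∈ K d n t ∧ ∃ i, x i = 0}

/-- `K_t^+ = {x ∈ K_t : max_i x_i = n+1}`. -/
def Kp (d n : ℕ) (t : ℤ) : Set (V d) := {x | x ∈ K d n t ∧ ∃ i, x i = (n : ℤ) + 1}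

/-- `K_t^{S-} = ∪_{ℓ ≤ t} K_ℓ^-`. -/
def KSm (d n : ℕ) (t : ℤ) : Set (V d) := {x | x ∈ Bset d n ∧ sum1 x ≤ t ∧ ∃ i, x i = 0}

/-- `K_t^{S+} = ∪_{ℓ ≤ t} K_ℓ^+`. -/
def KSp (d n : ℕ) (t : ℤ) : Set (V d) := {x | x ∈ Bset d n ∧ sum1 x ≤ t ∧ ∃ i, x i = (n : ℤ) + 1}

/-- The lower boundary region `J_t^S = K_t^{S-} ∪ K_{t+1}^{S+}`. -/
def JS (d n : ℕ) (t : ℤ) : Set (V d) := KSm d n t ∪ KSp d n (t + 1)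

/-- `J_t = K_t^- ∪ K_{t+1}^+`. -/
def Jslice (d n : ℕ) (t : ℤ) : Set (V d) := Km d n t ∪ Kp d n (t + 1)

/-- `u` is the γ-harmonic extension of boundary data `φ` (zero-extension convention
outside `D ∪ ∂D`). -/
def IsSol (d n : ℕ) (γ : V d → V d → ℝ) (φ u : V d → ℝ) : Prop :=
  (∀ p, p ∉ Vset d n → u p = 0) ∧
  (∀ p ∈ Dset d n, lap d n γ u p = 0) ∧
  (∀ p ∈ Bset d n, u p = φ p)

/-- The Laplacian row vector `v_p`. -/
def vrow (d n : ℕ) (γ : V d → V d → ℝ) (p : V d) : V d → ℝ := fun q =>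
  if Adj d n p q then γ p q
  else if q = p then -(∑ r ∈ nbr d n p, γ p r) else 0

/-- Restriction of a function to a set (zero outside). -/
def rst {d : ℕ} (S : Set (V d)) (f : V d → ℝ) : V d → ℝ := fun q => if q ∈ S then f q else 0

/-- Euclidean inner product of (vertex-supported) functions. -/
def dot (d n : ℕ) (f g : V d → ℝ) : ℝ := ∑ p ∈ box d n, f p * g p

/-- The localized solution space `𝒰^{(t)}`: restrictions to `L_t^S ∪ J_t^S` of
harmonic extensions of boundary potentials in `ker T₁^{(t)}`. -/
def Uset (d n : ℕ) (γ : V d → V d → ℝ) (t : ℤ) : Set (V d → ℝ) :=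
  {u | (∀ p, p ∉ LS d n t ∪ JS d n t → u p = 0) ∧
    ∃ φ w : V d → ℝ, (∀ p, p ∉ JS d n t → φ p = 0) ∧ IsSol d n γ φ w ∧
      (∀ p ∈ L d n (t + 1), w p = 0) ∧ ∀ p ∈ LS d n t ∪ JS d n t, u p = w p}

/-- The set `E_t` of edges between the consecutive layers:
`E(K_t^-, L_{t+1}) ∪ E(L_t, K_{t+1}^+) ∪ E(L_t, L_{t+1})`. -/
def EdgeT (d n : ℕ) (t : ℤ) (p q : V d) : Prop :=
  Adj d n p q ∧
    ((p ∈ Km d n t ∧ q ∈ L d n (t + 1)) ∨ (q ∈ Km d n t ∧ p ∈ L d n (t + 1)) ∨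
     (p ∈ L d n t ∧ q ∈ Kp d n (t + 1)) ∨ (q ∈ L d n t ∧ p ∈ Kp d n (t + 1)) ∨
     (p ∈ L d n t ∧ q ∈ L d n (t + 1)) ∨ (q ∈ L d n t ∧ p ∈ L d n (t + 1)))

/-- The edge vector `J_p^u ∈ ℝ^{E_t}`, `J_p^u(pq) = u_p - u_q` on edges of `E_t`
incident to `p`, and `0` otherwise (as a symmetric function of edge endpoints). -/
def Jvec (d n : ℕ) (t : ℤ) (u : V d → ℝ) (p : V d) : V d → V d → ℝ := fun a b =>
  if EdgeT d n t a b then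
    (if a = p then u a - u b else if b = p then u b - u a else 0)
  else 0

/-- Inner product of edge functions. -/
def dotE (d n : ℕ) (f g : V d → V d → ℝ) : ℝ :=
  ∑ p ∈ box d n, ∑ q ∈ box d n, f p q * g p q

section Lattice

variable {d n : ℕ}

lemma dist1_comm (p q : V d) : dist1 p q = dist1 q p := by
  simp only [dist1, abs_sub_comm]

lemma Adj.symm {p q : V d} (h : Adj d n p q) : Adj d n q p :=
  ⟨dist1_comm p q ▸ h.1, h.2.2.1, h.2.1, h.2.2.2.symm⟩

lemma abs_sub_le_dist1 (p q : V d) (i : Fin d) : |p i - q i| ≤ dist1 p q :=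
  Finset.single_le_sum (f := fun j => |p j - q j|) (fun _ _ => abs_nonneg _) (mem_univ i)

lemma abs_sum1_sub_le_dist1 (p q : V d) : |sum1 p - sum1 q| ≤ dist1 p q := by
  rw [sum1, sum1, ← Finset.sum_sub_distrib]
  exact Finset.abs_sum_le_sum_abs _ _

lemma mem_box_of_mem_Vset {p : V d} (hp : p ∈ Vset d n) : p ∈ box d n := by
  simp only [box, Fintype.mem_piFinset, Finset.mem_Icc]
  intro i
  rcases hp with hp | ⟨-, q, hq, hpq⟩
  · exact ⟨by linarith [(hp i).1], by linarith [(hp i).2]⟩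
  · have := abs_sub_le_dist1 p q i
    rw [hpq, abs_le] at this
    exact ⟨by linarith [(hq i).1], by linarith [(hq i).2]⟩

lemma mem_nbr {p q : V d} : q ∈ nbr d n p ↔ Adj d n p q := by
  simp only [nbr, Finset.mem_filter, and_iff_right_iff_imp]
  exact fun h => mem_box_of_mem_Vset h.2.2.1

lemma sum_sum_nbr_comm (f : V d → V d → ℝ) :
    ∑ p ∈ box d n, ∑ q ∈ nbr d n p, f p q = ∑ p ∈ box d n, ∑ q ∈ nbr d n p, f q p := by
  simp only [nbr, Finset.sum_filter]
  rw [Finset.sum_comm]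
  exact Finset.sum_congr rfl fun p _ => Finset.sum_congr rfl fun q _ =>
    if_congr ⟨Adj.symm, Adj.symm⟩ rfl rfl

lemma two_mul_sum_mul_lap {γ : V d → V d → ℝ} (hγ : ∀ p q, γ p q = γ q p) (w : V d → ℝ) :
    2 * ∑ p ∈ box d n, w p * lap d n γ w p
      = -∑ p ∈ box d n, ∑ q ∈ nbr d n p, γ q p * (w q - w p) ^ 2 := by
  have hS : ∑ p ∈ box d n, w p * lap d n γ w p
      = ∑ p ∈ box d n, ∑ q ∈ nbr d n p, γ q p * (w p * (w q - w p)) := by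
    refine Finset.sum_congr rfl fun p _ => ?_
    rw [lap, Finset.mul_sum]
    exact Finset.sum_congr rfl fun q _ => by ring
  have hS' := hS.trans (sum_sum_nbr_comm _)
  rw [two_mul]
  nth_rewrite 1 [hS]
  rw [hS', ← Finset.sum_add_distrib, ← Finset.sum_neg_distrib]
  refine Finset.sum_congr rfl fun p _ => ?_
  rw [← Finset.sum_add_distrib, ← Finset.sum_neg_distrib]
  refine Finset.sum_congr rfl fun q _ => ?_
  rw [hγ p q]
  ring

lemma eq_of_adj_of_sum_mul_lap_eq_zero {γ : V d → V d → ℝ} (hγ : GoodCond d n γ)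
    {w : V d → ℝ} (hw : ∑ p ∈ box d n, w p * lap d n γ w p = 0)
    {p q : V d} (hpq : Adj d n p q) : w p = w q := by
  have hterm_nonneg : ∀ a ∈ box d n, ∀ b ∈ nbr d n a, 0 ≤ γ b a * (w b - w a) ^ 2 :=
    fun a _ b hb => mul_nonneg (hγ.2 b a (mem_nbr.1 hb).symm).le (sq_nonneg _)
  have henergy : ∑ a ∈ box d n, ∑ b ∈ nbr d n a, γ b a * (w b - w a) ^ 2 = 0 := by
    linarith [two_mul_sum_mul_lap (n := n) hγ.1 w]
  have hp : p ∈ box d n := mem_box_of_mem_Vset hpq.2.1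
  have hrow := (Finset.sum_eq_zero_iff_of_nonneg fun a ha => Finset.sum_nonneg
    (hterm_nonneg a ha)).1 henergy p hp
  have hpq_term := (Finset.sum_eq_zero_iff_of_nonneg (hterm_nonneg p hp)).1 hrow q (mem_nbr.2 hpq)
  rcases mul_eq_zero.1 hpq_term with h | h
  · exact absurd h (hγ.2 q p hpq.symm).ne'
  · linarith [pow_eq_zero_iff (n := 2) two_ne_zero |>.1 h]

lemma le_sum1_of_mem_Dset {p : V d} (hp : p ∈ Dset d n) : (d : ℤ) ≤ sum1 p := by
  calc (d : ℤ) = ∑ _i : Fin d, (1 : ℤ) := by simp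
    _ ≤ sum1 p := Finset.sum_le_sum fun i _ => (hp i).1

lemma sum1_one : sum1 (fun _ => 1 : V d) = d := by
  simp [sum1]

lemma eq_one_of_sum1_le {p : V d} (hp : p ∈ Dset d n) (h : sum1 p ≤ d) : p = fun _ => 1 := by
  have hsum : ∑ i, (p i - 1) = 0 := by
    have : ∑ i, (p i - 1) = sum1 p - d := by simp [sum1, Finset.sum_sub_distrib]
    linarith [le_sum1_of_mem_Dset hp]
  funext i
  linarith [(Finset.sum_eq_zero_iff_of_nonneg (fun j _ => sub_nonneg.2 (hp j).1)).1 hsum i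
    (mem_univ i)]

lemma exists_two_le_of_sum1_gt {p : V d} (h : (d : ℤ) < sum1 p) : ∃ i, 2 ≤ p i := by
  by_contra! hlt
  have : sum1 p ≤ d := calc
    sum1 p ≤ ∑ _i : Fin d, (1 : ℤ) := Finset.sum_le_sum fun i _ => by linarith [hlt i]
    _ = d := by simp
  linarith

lemma sum1_sub_single (p : V d) (i : Fin d) : sum1 (p - Pi.single i 1) = sum1 p - 1 := by
  simp [sum1, Finset.sum_sub_distrib]

lemma dist1_sub_single (p : V d) (i : Fin d) : dist1 p (p - Pi.single i 1) = 1 := by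
  simp only [dist1, Pi.sub_apply, sub_sub_cancel]
  rw [Finset.sum_eq_single i (fun j _ hj => by simp [hj]) (by simp)]
  simp

lemma sub_single_mem_Dset {p : V d} (hp : p ∈ Dset d n) {i : Fin d} (hi : 2 ≤ p i) :
    p - Pi.single i 1 ∈ Dset d n := by
  intro j
  by_cases hj : j = i
  · subst hj
    simp only [Pi.sub_apply, Pi.single_eq_same]
    constructor <;> linarith [(hp j).2]
  · simpa [Pi.single_eq_of_ne hj] using hp j

lemma adj_sub_single {p : V d} (hp : p ∈ Dset d n) {i : Fin d} (hi : 2 ≤ p i) :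
    Adj d n p (p - Pi.single i 1) :=
  ⟨dist1_sub_single p i, Or.inl hp, Or.inl (sub_single_mem_Dset hp hi), Or.inl hp⟩

lemma eq_corner_of_forall_adj_eq {α : Type*} {w : V d → α}
    (hw : ∀ p q, Adj d n p q → w p = w q) {p : V d} (hp : p ∈ Dset d n) :
    w p = w fun _ => 1 := by
  suffices key : ∀ k : ℕ, ∀ p ∈ Dset d n, sum1 p = d + k → w p = w fun _ => 1 by
    obtain ⟨k, hk⟩ := Int.eq_ofNat_of_zero_le (sub_nonneg.2 (le_sum1_of_mem_Dset hp))
    exact key k p hp (by linarith)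
  intro k
  induction k with
  | zero => intro p hp hs; rw [eq_one_of_sum1_le hp (by simp [hs])]
  | succ k ih =>
    intro p hp hs
    obtain ⟨i, hi⟩ := exists_two_le_of_sum1_gt (p := p) (by push_cast at hs; linarith)
    rw [hw _ _ (adj_sub_single hp hi)]
    exact ih _ (sub_single_mem_Dset hp hi) (by rw [sum1_sub_single]; push_cast at hs; linarith)

lemma adj_of_mem_Dset_of_mem_Bset {p q : V d} (hp : p ∈ Dset d n) (hq : q ∈ Bset d n)
    (h : dist1 p q = 1) : Adj d n p q :=
  ⟨h, Or.inl hp, Or.inr hq, Or.inl hp⟩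

end Lattice

section Harmonic

variable {d n : ℕ} {γ : V d → V d → ℝ} {φ u : V d → ℝ}

lemma IsSol.eq_zero_of_adj_of_sum1_gt (hsol : IsSol d n γ φ u)
    (hφ : ∀ p ∈ Bset d n, (d : ℤ) ≤ sum1 p → φ p = 0) (hu : u (fun _ => 1) = 0)
    {p q : V d} (hps : (d : ℤ) < sum1 p) (hpq : Adj d n p q)
    (hq : ¬(q ∈ Dset d n ∧ (d : ℤ) < sum1 q)) : u q = 0 := by
  have hclose := abs_sum1_sub_le_dist1 p q
  rw [hpq.1, abs_le] at hclose
  rcases hpq.2.2.1 with hqD | hqB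
  · rwa [eq_one_of_sum1_le hqD (not_lt.1 fun h => hq ⟨hqD, h⟩)]
  · rw [hsol.2.2 q hqB, hφ q hqB (by linarith)]

lemma IsSol.eq_zero_of_sum1_gt (hγ : GoodCond d n γ) (hsol : IsSol d n γ φ u)
    (hφ : ∀ p ∈ Bset d n, (d : ℤ) ≤ sum1 p → φ p = 0) (hu : u (fun _ => 1) = 0)
    {p : V d} (hp : p ∈ Dset d n) (hps : (d : ℤ) < sum1 p) : u p = 0 := by
  set w : V d → ℝ := fun q => if q ∈ Dset d n ∧ (d : ℤ) < sum1 q then u q else 0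
  have hagree : ∀ q, q ∈ Dset d n ∧ (d : ℤ) < sum1 q → ∀ r, r = q ∨ Adj d n q r → w r = u r := by
    rintro q hq r hr
    by_cases hr' : r ∈ Dset d n ∧ (d : ℤ) < sum1 r
    · exact if_pos hr'
    · rcases hr with rfl | hqr
      · exact absurd hq hr'
      · rw [hsol.eq_zero_of_adj_of_sum1_gt hφ hu hq.2 hqr hr']
        exact if_neg hr'
  have henergy : ∑ q ∈ box d n, w q * lap d n γ w q = 0 := by
    refine Finset.sum_eq_zero fun q _ => ?_
    by_cases hq : q ∈ Dset d n ∧ (d : ℤ) < sum1 q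
    · have hlap : lap d n γ w q = lap d n γ u q := Finset.sum_congr rfl fun r hr => by
        rw [hagree q hq r (Or.inr (mem_nbr.1 hr)), hagree q hq q (Or.inl rfl)]
      rw [hlap, hsol.2.1 q hq.1, mul_zero]
    · rw [show w q = 0 from if_neg hq, zero_mul]
  have hcorner : w (fun _ => 1) = 0 := if_neg fun h => by linarith [h.2, sum1_one (d := d)]
  rw [← hagree p ⟨hp, hps⟩ p (Or.inl rfl), ← hcorner]
  exact eq_corner_of_forall_adj_eq (fun a b h => eq_of_adj_of_sum_mul_lap_eq_zero hγ henergy h) hp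

lemma IsSol.eq_zero_of_notMem_K (hγ : GoodCond d n γ) (hsol : IsSol d n γ φ u)
    (hφ : ∀ p, p ∉ K d n (d - 1) → φ p = 0) (hu : u (fun _ => 1) = 0)
    {p : V d} (hp : p ∉ K d n (d - 1)) : u p = 0 := by
  have hφ' : ∀ p ∈ Bset d n, (d : ℤ) ≤ sum1 p → φ p = 0 :=
    fun p _ hps => hφ p fun h => by linarith [h.2]
  by_cases hpV : p ∈ Vset d n
  · rcases hpV with hpD | hpB
    · rcases (le_sum1_of_mem_Dset hpD).lt_or_eq with hps | hps
      · exact hsol.eq_zero_of_sum1_gt hγ hφ' hu hpD hps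
      · rwa [eq_one_of_sum1_le hpD hps.ge]
    · rw [hsol.2.2 p hpB, hφ p hp]
  · exact hsol.1 p hpV

lemma lap_eq_zero_of_ne_corner (hu : ∀ q, q ∉ K d n (d - 1) → u q = 0) {p : V d}
    (hp : p ∈ Dset d n) (hpc : p ≠ fun _ => 1) : lap d n γ u p = 0 := by
  refine Finset.sum_eq_zero fun q hq => ?_
  have huq : u q = 0 := hu q fun hqK => hpc <| eq_one_of_sum1_le hp <| by
    have hclose := abs_sum1_sub_le_dist1 p q
    rw [(mem_nbr.1 hq).1, hqK.2, abs_le] at hclose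
    linarith
  rw [huq, hu p fun hpK => hpK.1.1 hp, sub_zero, mul_zero]

lemma isSol_self_of_lap_corner (hφ : ∀ q, q ∉ K d n (d - 1) → φ q = 0) (hlap : lap d n γ φ (fun _ => 1) = 0) :
    IsSol d n γ φ φ := by
  refine ⟨fun p hp => hφ p fun hpK => hp (Or.inr hpK.1), fun p hp => ?_, fun _ _ => rfl⟩
  by_cases hpc : p = fun _ => 1
  · rwa [hpc]
  · exact lap_eq_zero_of_ne_corner hφ hp hpc

end Harmonic

section Corner

variable {n : ℕ}

lemma corner_two : (![1, 1] : V 2) = fun _ => 1 := by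
  ext i; fin_cases i <;> rfl

lemma corner_mem_Dset (hn : 1 ≤ n) : (![1, 1] : V 2) ∈ Dset 2 n := by
  rw [corner_two]; exact fun _ => ⟨le_rfl, show (1 : ℤ) ≤ n by exact_mod_cast hn⟩

lemma zero_one_mem_K (hn : 1 ≤ n) : (![0, 1] : V 2) ∈ K 2 n 1 :=
  ⟨⟨fun h => by simpa using (h 0).1, _, corner_mem_Dset hn, by simp [dist1]⟩, by simp [sum1]⟩

lemma one_zero_mem_K (hn : 1 ≤ n) : (![1, 0] : V 2) ∈ K 2 n 1 :=
  ⟨⟨fun h => by simpa using (h 1).1, _, corner_mem_Dset hn, by simp [dist1]⟩, by simp [sum1]⟩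

lemma K_two_one (hn : 1 ≤ n) : K 2 n 1 = ({![0, 1], ![1, 0]} : Set (V 2)) := by
  ext p
  refine ⟨fun ⟨hpB, hps⟩ => ?_, fun hp => ?_⟩
  · have hbox := Fintype.mem_piFinset.1 (mem_box_of_mem_Vset (Or.inr hpB))
    have h0 := (Finset.mem_Icc.1 (hbox 0)).1
    have h1 := (Finset.mem_Icc.1 (hbox 1)).1
    rw [sum1, Fin.sum_univ_two] at hps
    rcases (by omega : p 0 = 0 ∧ p 1 = 1 ∨ p 0 = 1 ∧ p 1 = 0) with ⟨h0, h1⟩ | ⟨h0, h1⟩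
    · left; ext i; fin_cases i <;> simp [h0, h1]
    · right; ext i; fin_cases i <;> simp [h0, h1]
  · rcases hp with rfl | rfl
    exacts [zero_one_mem_K hn, one_zero_mem_K hn]

lemma notMem_K_two_one (hn : 1 ≤ n) {q : V 2} (ha : q ≠ ![0, 1]) (hb : q ≠ ![1, 0]) :
    q ∉ K 2 n 1 := by
  simp [K_two_one hn, ha, hb]

lemma L_two_two (hn : 1 ≤ n) : L 2 n 2 = ({![1, 1]} : Set (V 2)) := by
  ext p
  refine ⟨fun ⟨hpD, hps⟩ => ?_, fun hp => ?_⟩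
  · rw [Set.mem_singleton_iff, corner_two]
    exact eq_one_of_sum1_le hpD (by simp [hps])
  · rw [Set.mem_singleton_iff.1 hp]
    exact ⟨corner_mem_Dset hn, by simp [sum1]⟩

lemma zero_one_ne_one_zero : (![0, 1] : V 2) ≠ ![1, 0] := by
  simp

lemma lap_corner_two (hn : 1 ≤ n) {γ : V 2 → V 2 → ℝ} {u : V 2 → ℝ}
    (hu : ∀ q, q ∉ K 2 n 1 → u q = 0) :
    lap 2 n γ u ![1, 1] = γ ![0, 1] ![1, 1] * u ![0, 1] + γ ![1, 0] ![1, 1] * u ![1, 0] := by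
  have huc : u ![1, 1] = 0 := hu _ fun h => h.1.1 (corner_mem_Dset hn)
  rw [lap, Finset.sum_eq_add_of_mem _ _
    (mem_nbr.2 (adj_of_mem_Dset_of_mem_Bset (corner_mem_Dset hn) (zero_one_mem_K hn).1
      (by simp [dist1])))
    (mem_nbr.2 (adj_of_mem_Dset_of_mem_Bset (corner_mem_Dset hn) (one_zero_mem_K hn).1
      (by simp [dist1])))
    zero_one_ne_one_zero
    fun q _ hq => by rw [hu q (notMem_K_two_one hn hq.1 hq.2), huc, sub_zero, mul_zero]]
  rw [huc, sub_zero, sub_zero]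

lemma dot_two_eq (hn : 1 ≤ n) {w : V 2 → ℝ} (hw : ∀ p, p ∉ K 2 n 1 → w p = 0) (φ : V 2 → ℝ) :
    dot 2 n w φ = w ![0, 1] * φ ![0, 1] + w ![1, 0] * φ ![1, 0] :=
  Finset.sum_eq_add_of_mem _ _ (mem_box_of_mem_Vset (Or.inr (zero_one_mem_K hn).1))
    (mem_box_of_mem_Vset (Or.inr (one_zero_mem_K hn).1)) zero_one_ne_one_zero
    fun q _ hq => by rw [hw q (notMem_K_two_one hn hq.1 hq.2), zero_mul]

variable {γ : V 2 → V 2 → ℝ}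

lemma IsSol.corner_flux_eq_zero (hn : 1 ≤ n) (hγ : GoodCond 2 n γ) {φ u : V 2 → ℝ}
    (hsol : IsSol 2 n γ φ u) (hφ : ∀ p, p ∉ K 2 n 1 → φ p = 0) (hu : u ![1, 1] = 0) :
    γ ![0, 1] ![1, 1] * φ ![0, 1] + γ ![1, 0] ![1, 1] * φ ![1, 0] = 0 := by
  have hu_off : ∀ p, p ∉ K 2 n 1 → u p = 0 :=
    fun p => hsol.eq_zero_of_notMem_K hγ hφ (corner_two ▸ hu)
  rw [← hsol.2.2 _ (zero_one_mem_K hn).1, ← hsol.2.2 _ (one_zero_mem_K hn).1,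
    ← lap_corner_two hn hu_off]
  exact hsol.2.1 _ (corner_mem_Dset hn)

def cornerTest (γ : V 2 → V 2 → ℝ) : V 2 → ℝ :=
  Pi.single ![0, 1] (γ ![1, 0] ![1, 1]) - Pi.single ![1, 0] (γ ![0, 1] ![1, 1])

lemma cornerTest_eq_zero_of_notMem_K (hn : 1 ≤ n) {p : V 2} (hp : p ∉ K 2 n 1) :
    cornerTest γ p = 0 := by
  have ha : p ≠ ![0, 1] := fun h => hp (h ▸ zero_one_mem_K hn)
  have hb : p ≠ ![1, 0] := fun h => hp (h ▸ one_zero_mem_K hn)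
  simp [cornerTest, ha, hb]

lemma cornerTest_zero_one : cornerTest γ ![0, 1] = γ ![1, 0] ![1, 1] := by
  simp [cornerTest]

lemma cornerTest_one_zero : cornerTest γ ![1, 0] = -γ ![0, 1] ![1, 1] := by
  simp [cornerTest, zero_one_ne_one_zero.symm]

lemma isSol_cornerTest (hn : 1 ≤ n) : IsSol 2 n γ (cornerTest γ) (cornerTest γ) := by
  refine isSol_self_of_lap_corner (fun q => cornerTest_eq_zero_of_notMem_K hn) ?_
  rw [← corner_two, lap_corner_two hn fun q => cornerTest_eq_zero_of_notMem_K hn,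
    cornerTest_zero_one, cornerTest_one_zero]
  ring

lemma eq_smul_of_dot_cornerTest_eq_zero (hn : 1 ≤ n) (hγ : GoodCond 2 n γ) {w : V 2 → ℝ}
    (hw : ∀ p, p ∉ K 2 n 1 → w p = 0) (horth : dot 2 n w (cornerTest γ) = 0) :
    w = (w ![0, 1] / γ ![0, 1] ![1, 1]) • rst (K 2 n 1) (fun q => γ q ![1, 1]) := by
  have hγa : γ ![0, 1] ![1, 1] ≠ 0 := (hγ.2 _ _ (adj_of_mem_Dset_of_mem_Bset (corner_mem_Dset hn)
    (zero_one_mem_K hn).1 (by simp [dist1])).symm).ne'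
  rw [dot_two_eq hn hw, cornerTest_zero_one, cornerTest_one_zero] at horth
  funext p
  by_cases hp : p ∈ K 2 n 1
  · rw [K_two_one hn] at hp
    rcases hp with rfl | rfl
    · simp [rst, zero_one_mem_K hn, hγa]
    · rw [Pi.smul_apply, smul_eq_mul, rst, if_pos (one_zero_mem_K hn)]
      field_simp
      linarith
  · simp [rst, hp, hw p hp]

end Corner

/-- the base case in dimension `d = 2`: `K_1 = {(0,1),(1,0)}`,
`L_2 = {(1,1)}`, and the orthogonal complement of `ker T₁^{(1)}` in `ℝ^{K_1}`
consists exactly of the scalar multiples of `(γ_{(0,1)(1,1)}, γ_{(1,0)(1,1)})`. -/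
theorem stmt12 (n : ℕ) (hn : 1 ≤ n)
    (γ : V 2 → V 2 → ℝ) (hγ : GoodCond 2 n γ) :
    K 2 n 1 = ({![0, 1], ![1, 0]} : Set (V 2)) ∧
    L 2 n 2 = ({![1, 1]} : Set (V 2)) ∧
    {w : V 2 → ℝ | (∀ p, p ∉ K 2 n 1 → w p = 0) ∧
        ∀ φ : V 2 → ℝ, ((∀ p, p ∉ K 2 n 1 → φ p = 0) ∧
          ∃ u : V 2 → ℝ, IsSol 2 n γ φ u ∧ ∀ p ∈ L 2 n 2, u p = 0) →
        dot 2 n w φ = 0}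
      = {w : V 2 → ℝ | ∃ α : ℝ, w = α • rst (K 2 n 1) (fun q => γ q ![1, 1])} := by
  refine ⟨K_two_one hn, L_two_two hn, Set.ext fun w => ⟨fun ⟨hw, horth⟩ => ?_, ?_⟩⟩
  · have hφ := fun p => cornerTest_eq_zero_of_notMem_K (γ := γ) hn (p := p)
    refine ⟨_, eq_smul_of_dot_cornerTest_eq_zero hn hγ hw
      (horth _ ⟨hφ, _, isSol_cornerTest hn, fun p hp => hφ p fun hpK => ?_⟩)⟩
    rw [L_two_two hn] at hp
    exact hpK.1.1 (hp ▸ corner_mem_Dset hn)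
  · rintro ⟨α, rfl⟩
    have hw : ∀ p, p ∉ K 2 n 1 → (α • rst (K 2 n 1) (fun q => γ q ![1, 1])) p = 0 :=
      fun p hp => by simp [rst, hp]
    refine ⟨hw, fun φ ⟨hφ, u, hsol, hu⟩ => ?_⟩
    rw [dot_two_eq hn hw]
    simp only [Pi.smul_apply, smul_eq_mul, rst, zero_one_mem_K hn, one_zero_mem_K hn, if_true]
    linear_combination α * hsol.corner_flux_eq_zero hn hγ hφ (hu _ (by rw [L_two_two hn]; rfl))

end DiscreteCalderon
end
end

section
/- In the d-dimensional lattice graph, suppose coefficients c : L_{t+1} → ℝ satisfy Σ_{q ∈ N(p) ∩ L_{t+1}} c_q γ_{pq} = 0 for every p ∈ L_t ∪ K_t^−. Extending c by zero to L_t^S ∪ J_t^S, the function c is γ-harmonic on L_t, vanishes on J_t^S together with its boundary current, and hence c ≡ 0 on L_{t+1}. -/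
noncomputable section
open Classical Finset

namespace DiscreteCalderon

/-!
Every interior node `q` of `L_{t+1}` is reached from the node `p = q - e₀` of `L_t ∪ K_t^-`
one step below it. All other neighbours of `p` in `L_{t+1}` have first coordinate `q₀ - 1`,
so if `c` is already known to vanish on the nodes of `L_{t+1}` with smaller first coordinate,
the constraint at `p` reduces to `γ_{pq} c_q = 0`, whence `c_q = 0` by positivity of `γ`.
The remaining claims are bookkeeping: a node of `J_t^S` with a neighbour in `L_{t+1}` lies in
`K_t^-`, so there the boundary current of `c` is one of the given constraints.
-/

variable {d n : ℕ}

lemma sum_mul_sub_eq_sum_filter {α : Type*} (s : Finset α) (S : Set α) (w c : α → ℝ) {a : α}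
    (hc : ∀ x, x ∉ S → c x = 0) (ha : c a = 0) :
    ∑ x ∈ s, w x * (c x - c a) = ∑ x ∈ s.filter (· ∈ S), w x * c x := by
  rw [Finset.sum_filter_of_ne fun x _ hx => by_contra fun hxS => hx (by rw [hc x hxS]; ring)]
  simp only [ha, sub_zero]

lemma exists_coord_of_dist1_eq_one {p q : V d} (h : dist1 p q = 1) :
    ∃ j, |p j - q j| = 1 ∧ ∀ i, i ≠ j → p i = q i := by
  obtain ⟨j, hj⟩ : ∃ j, |p j - q j| ≠ 0 := by
    by_contra! hc
    have : dist1 p q = 0 := Finset.sum_eq_zero fun i _ => hc i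
    omega
  have hsplit : |p j - q j| + ∑ i ∈ univ.erase j, |p i - q i| = 1 := by
    rw [Finset.add_sum_erase univ (fun i => |p i - q i|) (mem_univ j)]; exact h
  have hrest : 0 ≤ ∑ i ∈ univ.erase j, |p i - q i| := Finset.sum_nonneg fun i _ => abs_nonneg _
  have hj1 : |p j - q j| = 1 := by have := abs_nonneg (p j - q j); omega
  refine ⟨j, hj1, fun i hi => ?_⟩
  have hzero := (Finset.sum_eq_zero_iff_of_nonneg fun i _ => abs_nonneg (p i - q i)).mp
    (by omega) i (mem_erase.mpr ⟨hi, mem_univ i⟩)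
  exact sub_eq_zero.mp (abs_eq_zero.mp hzero)

lemma sum1_sub_sum1_of_eq_of_ne {p q : V d} (j : Fin d) (h : ∀ i, i ≠ j → p i = q i) :
    sum1 q - sum1 p = q j - p j := by
  rw [sum1, sum1, ← Finset.sum_sub_distrib]
  exact Finset.sum_eq_single_of_mem j (mem_univ j) fun i _ hi => by rw [h i hi, sub_self]

lemma sum1_eq_add_one_or_sub_one {p q : V d} (h : dist1 p q = 1) :
    sum1 q = sum1 p + 1 ∨ sum1 q = sum1 p - 1 := by
  obtain ⟨j, hj1, hj⟩ := exists_coord_of_dist1_eq_one h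
  have := sum1_sub_sum1_of_eq_of_ne j hj
  rcases (abs_eq (by norm_num)).mp hj1 with h' | h' <;> omega

lemma exists_coord_succ_of_sum1_eq_add_one {p q : V d} (h : dist1 p q = 1)
    (hsum : sum1 q = sum1 p + 1) : ∃ j, q j = p j + 1 ∧ ∀ i, i ≠ j → q i = p i := by
  obtain ⟨j, hj1, hj⟩ := exists_coord_of_dist1_eq_one h
  have := sum1_sub_sum1_of_eq_of_ne j hj
  refine ⟨j, ?_, fun i hi => (hj i hi).symm⟩
  rcases (abs_eq (by norm_num)).mp hj1 with h' | h' <;> omega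

lemma notMem_Dset_of_coord_eq_of_sum1_eq_add_one {p q : V d} {i : Fin d}
    (hi : p i = (n : ℤ) + 1) (h : dist1 p q = 1) (hsum : sum1 q = sum1 p + 1) :
    q ∉ Dset d n := by
  intro hq
  obtain ⟨j, hj, hother⟩ := exists_coord_succ_of_sum1_eq_add_one h hsum
  have := (hq i).2
  by_cases hij : i = j
  · subst hij; omega
  · rw [hother i hij] at this; omega

lemma mem_nbr_of_adj {p q : V d} (h : Adj d n p q) : q ∈ nbr d n p :=
  mem_filter.mpr ⟨mem_box_of_mem_Vset h.2.2.1, h⟩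

lemma mem_Km_of_mem_JS_of_adj {t : ℤ} {p q : V d} (hp : p ∈ JS d n t) (hpq : Adj d n p q)
    (hq : q ∈ L d n (t + 1)) : p ∈ Km d n t := by
  have hstep := sum1_eq_add_one_or_sub_one hpq.1
  rcases hp with ⟨hB, hle, hzero⟩ | ⟨-, hle, i, hi⟩
  · exact ⟨⟨hB, by rw [hq.2] at hstep; omega⟩, hzero⟩
  · exact absurd hq.1 <| notMem_Dset_of_coord_eq_of_sum1_eq_add_one hi hpq.1
      (by rw [hq.2] at hstep ⊢; omega)

lemma dist1_update_sub_one (q : V d) (i : Fin d) :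
    dist1 (Function.update q i (q i - 1)) q = 1 := by
  rw [dist1, Finset.sum_eq_single_of_mem i (mem_univ i) fun j _ hj => by
    rw [Function.update_of_ne hj, sub_self, abs_zero]]
  simp

lemma sum1_update_sub_one (q : V d) (i : Fin d) :
    sum1 (Function.update q i (q i - 1)) = sum1 q - 1 := by
  have := sum1_sub_sum1_of_eq_of_ne (q := q) i fun j hj => Function.update_of_ne hj (q i - 1) q
  rw [Function.update_self] at this
  omega

lemma update_sub_one_mem_L_union_Km {t : ℤ} {q : V d} (hq : q ∈ L d n (t + 1)) (i : Fin d) :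
    Function.update q i (q i - 1) ∈ L d n t ∪ Km d n t := by
  have hsum : sum1 (Function.update q i (q i - 1)) = t := by
    rw [sum1_update_sub_one, hq.2]; ring
  by_cases hqi : q i = 1
  · have hpi : Function.update q i (q i - 1) i = 0 := by simp [hqi]
    refine Or.inr ⟨⟨⟨fun hD => ?_, q, hq.1, dist1_update_sub_one q i⟩, hsum⟩, i, hpi⟩
    have := (hD i).1
    omega
  · refine Or.inl ⟨fun j => ?_, hsum⟩
    have := hq.1 j
    by_cases hji : j = i
    · subst hji; simp only [Function.update_self]; omega
    · rw [Function.update_of_ne hji]; exact this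

lemma adj_update_sub_one {t : ℤ} {q : V d} (hq : q ∈ L d n (t + 1)) (i : Fin d) :
    Adj d n (Function.update q i (q i - 1)) q := by
  refine ⟨dist1_update_sub_one q i, ?_, Or.inl hq.1, Or.inr hq.1⟩
  rcases update_sub_one_mem_L_union_Km hq i with hL | hK
  exacts [Or.inl hL.1, Or.inr hK.1.1]

lemma coord_lt_of_mem_nbr_update_sub_one {q r : V d} {i : Fin d}
    (hr : r ∈ nbr d n (Function.update q i (q i - 1)))
    (hsum : sum1 r = sum1 q) (hrq : r ≠ q) : r i < q i := by
  have hpq : sum1 q = sum1 (Function.update q i (q i - 1)) + 1 := by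
    rw [sum1_update_sub_one]; ring
  obtain ⟨j, hj, hother⟩ :=
    exists_coord_succ_of_sum1_eq_add_one (mem_filter.mp hr).2.1 (hsum.trans hpq)
  by_cases hji : j = i
  · subst hji
    refine absurd (funext fun k => ?_) hrq
    by_cases hk : k = j
    · subst hk; simp [hj]
    · rw [hother k hk, Function.update_of_ne hk]
  · rw [hother i (Ne.symm hji)]
    simp

theorem eq_zero_of_sum_nbr_filter_L_eq_zero {γ : V d → V d → ℝ}
    (hγ : ∀ p q, Adj d n p q → 0 < γ p q) (i : Fin d) {t : ℤ} {c : V d → ℝ}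
    (hlin : ∀ p ∈ L d n t ∪ Km d n t,
      ∑ q ∈ (nbr d n p).filter (fun q => q ∈ L d n (t + 1)), γ p q * c q = 0) :
    ∀ q ∈ L d n (t + 1), c q = 0 := by
  suffices h : ∀ k : ℕ, ∀ q ∈ L d n (t + 1), q i ≤ k → c q = 0 from
    fun q hq => h (q i).toNat q hq (Int.self_le_toNat _)
  intro k
  induction k with
  | zero => intro q hq hqk; have := (hq.1 i).1; omega
  | succ k ih =>
    intro q hq hqk
    have hadj := adj_update_sub_one hq i
    have hsingle := hlin _ (update_sub_one_mem_L_union_Km hq i)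
    rw [Finset.sum_eq_single_of_mem q (mem_filter.mpr ⟨mem_nbr_of_adj hadj, hq⟩)
      fun r hr hrq => by
        obtain ⟨hr, hrL⟩ := mem_filter.mp hr
        have := coord_lt_of_mem_nbr_update_sub_one hr (hrL.2.trans hq.2.symm) hrq
        rw [ih r hrL (by omega), mul_zero]] at hsingle
    exact (mul_eq_zero.mp hsingle).resolve_left (hγ _ _ hadj).ne'

theorem stmt19_general (d n : ℕ) (hd : 2 ≤ d)
    (γ : V d → V d → ℝ) (hγ : GoodCond d n γ)
    (t : ℤ)
    (c : V d → ℝ)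
    (hsupp : ∀ p, p ∉ L d n (t + 1) → c p = 0)
    (hlin : ∀ p ∈ L d n t ∪ Km d n t,
      ∑ q ∈ (nbr d n p).filter (fun q => q ∈ L d n (t + 1)), γ p q * c q = 0) :
    (∀ p ∈ L d n t, lap d n γ c p = 0) ∧
    (∀ p ∈ JS d n t, c p = 0 ∧ cur d n γ c p = 0) ∧
    (∀ p ∈ L d n (t + 1), c p = 0) := by
  refine ⟨fun p hp => ?_, fun p hp => ?_,
    eq_zero_of_sum_nbr_filter_L_eq_zero hγ.2 ⟨0, by omega⟩ hlin⟩
  · have hcp : c p = 0 := hsupp p fun h => by have := hp.2.symm.trans h.2; omega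
    rw [lap, sum_mul_sub_eq_sum_filter _ _ _ _ hsupp hcp]
    simp only [hγ.1 _ p]
    exact hlin p (Or.inl hp)
  · have hpB : p ∉ Dset d n := by rcases hp with h | h <;> exact h.1.1
    have hcp : c p = 0 := hsupp p fun h => hpB h.1
    have hnbr : (nbrD d n p).filter (· ∈ L d n (t + 1)) =
        (nbr d n p).filter (fun q => q ∈ L d n (t + 1)) := by
      rw [nbrD, filter_filter]
      exact filter_congr fun q _ => and_iff_right_of_imp fun hq => hq.1
    refine ⟨hcp, ?_⟩
    rw [cur, sum_mul_sub_eq_sum_filter _ _ _ _ hsupp hcp, hnbr]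
    by_cases hK : p ∈ Km d n t
    · exact hlin p (Or.inr hK)
    · refine Finset.sum_eq_zero fun q hq => ?_
      obtain ⟨hq, hqL⟩ := mem_filter.mp hq
      exact absurd (mem_Km_of_mem_JS_of_adj hp (mem_filter.mp hq).2 hqL) hK

/-- if coefficients `c` on `L_{t+1}` satisfy
`∑_{q ∈ N(p) ∩ L_{t+1}} γ_{pq} c_q = 0` for all `p ∈ L_t ∪ K_t^-`, then the
zero-extension of `c` is γ-harmonic on `L_t`, has vanishing Cauchy data on
`J_t^S`, and hence `c ≡ 0` on `L_{t+1}`. -/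
theorem stmt19 (d n : ℕ) (hd : 2 ≤ d) (hn : 1 ≤ n)
    (γ : V d → V d → ℝ) (hγ : GoodCond d n γ)
    (t : ℤ) (ht1 : (d : ℤ) - 1 ≤ t) (ht2 : t ≤ (d : ℤ) * n - 1)
    (c : V d → ℝ)
    (hsupp : ∀ p, p ∉ L d n (t + 1) → c p = 0)
    (hlin : ∀ p ∈ L d n t ∪ Km d n t,
      ∑ q ∈ (nbr d n p).filter (fun q => q ∈ L d n (t + 1)), γ p q * c q = 0) :
    (∀ p ∈ L d n t, lap d n γ c p = 0) ∧
    (∀ p ∈ JS d n t, c p = 0 ∧ cur d n γ c p = 0) ∧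
    (∀ p ∈ L d n (t + 1), c p = 0) :=
  stmt19_general d n hd γ hγ t c hsupp hlin

end DiscreteCalderon
end
end
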